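/- Let T^{*,*,*} be a triple complex of R-modules with three anticommuting differentials d_x, d_y, d_z. If T is exact in the z-direction, i.e. each complex T^{x,y,*} is acyclic, then the below-and-left truncated totalisation bltTot(T), whose n-th term is the truncated product {Σ_{p,q≥k} m_{p,q} x^p y^q | m_{p,q} ∈ T^{p,q,n-p-q}} with differential d = d_x + d_y + d_z, is acyclic. -/

import Mathlib

/-
A primitive `b` of a cycle `a` of `bltTot` is built by induction on `p + q`, with `b = 0` where
`p < k` or `q < k`; the truncation is what makes this induction well founded. At `(p, q)` one must
solve `d_z b_{p,q} = a_{p,q} - d_x b_{p-1,q} - d_y b_{p,q-1}`. By the equations already solved at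
`(p-1, q)` and `(p, q-1)`, the cycle condition on `a` and the anticommutation relations, the
right-hand side is a `d_z`-cycle, hence a `d_z`-boundary by exactness in the `z`-direction.
-/

def castT {R : Type} [Ring R] (T : ℤ → ℤ → ℤ → Type)
    [∀ x y z, AddCommGroup (T x y z)] [∀ x y z, Module R (T x y z)] :
    ∀ {x y z x' y' z' : ℤ}, x = x' → y = y' → z = z' → (T x y z →ₗ[R] T x' y' z')
  | _, _, _, _, _, _, rfl, rfl, rfl => LinearMap.id

/-- The differential `d_x + d_y + d_z` of the totalisation of a triple complex, with `n`-th
term the full product `∀ p q, T p q (n - p - q)`.  Restricted to elements which vanish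
whenever `p` or `q` is sufficiently small, this is the differential of the below-and-left
truncated totalisation `bltTot`. -/
def tot3d {R : Type} [Ring R] (T : ℤ → ℤ → ℤ → Type)
    [∀ x y z, AddCommGroup (T x y z)] [∀ x y z, Module R (T x y z)]
    (dx : ∀ x y z, T x y z →ₗ[R] T (x + 1) y z)
    (dy : ∀ x y z, T x y z →ₗ[R] T x (y + 1) z)
    (dz : ∀ x y z, T x y z →ₗ[R] T x y (z + 1))
    (n : ℤ) : (∀ p q, T p q (n - p - q)) →ₗ[R] (∀ p q, T p q (n + 1 - p - q)) :=
  LinearMap.pi fun p => LinearMap.pi fun q =>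
    (castT T (by omega : p - 1 + 1 = p) rfl (by omega : n - (p - 1) - q = n + 1 - p - q)).comp
        ((dx (p - 1) q (n - (p - 1) - q)).comp
          ((LinearMap.proj (φ := fun q' => T (p - 1) q' (n - (p - 1) - q')) q).comp
            (LinearMap.proj (φ := fun p' => ∀ q', T p' q' (n - p' - q')) (p - 1))))
      + (castT T rfl (by omega : q - 1 + 1 = q)
            (by omega : n - p - (q - 1) = n + 1 - p - q)).comp
        ((dy p (q - 1) (n - p - (q - 1))).comp
          ((LinearMap.proj (φ := fun q' => T p q' (n - p - q')) (q - 1)).comp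
            (LinearMap.proj (φ := fun p' => ∀ q', T p' q' (n - p' - q')) p)))
      + ((castT T rfl rfl (by omega : n - p - q + 1 = n + 1 - p - q) :
            T p q (n - p - q + 1) →ₗ[R] T p q (n + 1 - p - q))).comp
        ((dz p q (n - p - q)).comp
          ((LinearMap.proj (φ := fun q' => T p q' (n - p - q')) q).comp
            (LinearMap.proj (φ := fun p' => ∀ q', T p' q' (n - p' - q')) p)))

section castT

variable {R : Type} [Ring R] {T : ℤ → ℤ → ℤ → Type}
    [∀ x y z, AddCommGroup (T x y z)] [∀ x y z, Module R (T x y z)]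

@[simp]
theorem castT_castT {x y z x' y' z' x'' y'' z'' : ℤ}
    (h₁ : x = x') (h₂ : y = y') (h₃ : z = z')
    (h₁' : x' = x'') (h₂' : y' = y'') (h₃' : z' = z'') (m : T x y z) :
    castT (R := R) T h₁' h₂' h₃' (castT (R := R) T h₁ h₂ h₃ m)
      = castT (R := R) T (h₁.trans h₁') (h₂.trans h₂') (h₃.trans h₃') m := by
  subst h₁ h₂ h₃ h₁' h₂' h₃'; rfl

@[simp]
theorem castT_rfl {x y z : ℤ} (m : T x y z) : castT (R := R) T rfl rfl rfl m = m := rfl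

@[simp]
theorem castT_eq_zero_iff {x y z x' y' z' : ℤ} (h₁ : x = x') (h₂ : y = y') (h₃ : z = z')
    (m : T x y z) : castT (R := R) T h₁ h₂ h₃ m = 0 ↔ m = 0 := by
  subst h₁ h₂ h₃; rfl

theorem dx_castT (dx : ∀ x y z, T x y z →ₗ[R] T (x + 1) y z) {x y z x' y' z' : ℤ}
    (h₁ : x = x') (h₂ : y = y') (h₃ : z = z') (m : T x y z) :
    dx x' y' z' (castT (R := R) T h₁ h₂ h₃ m)
      = castT (R := R) T (congrArg (· + 1) h₁) h₂ h₃ (dx x y z m) := by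
  subst h₁ h₂ h₃; rfl

theorem dy_castT (dy : ∀ x y z, T x y z →ₗ[R] T x (y + 1) z) {x y z x' y' z' : ℤ}
    (h₁ : x = x') (h₂ : y = y') (h₃ : z = z') (m : T x y z) :
    dy x' y' z' (castT (R := R) T h₁ h₂ h₃ m)
      = castT (R := R) T h₁ (congrArg (· + 1) h₂) h₃ (dy x y z m) := by
  subst h₁ h₂ h₃; rfl

theorem dz_castT (dz : ∀ x y z, T x y z →ₗ[R] T x y (z + 1)) {x y z x' y' z' : ℤ}
    (h₁ : x = x') (h₂ : y = y') (h₃ : z = z') (m : T x y z) :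
    dz x' y' z' (castT (R := R) T h₁ h₂ h₃ m)
      = castT (R := R) T h₁ h₂ (congrArg (· + 1) h₃) (dz x y z m) := by
  subst h₁ h₂ h₃; rfl

end castT

namespace tot3d

variable {R : Type} [Ring R] {T : ℤ → ℤ → ℤ → Type}
    [∀ x y z, AddCommGroup (T x y z)] [∀ x y z, Module R (T x y z)]
    (dx : ∀ x y z, T x y z →ₗ[R] T (x + 1) y z)
    (dy : ∀ x y z, T x y z →ₗ[R] T x (y + 1) z)
    (dz : ∀ x y z, T x y z →ₗ[R] T x y (z + 1))

def compX (n p q : ℤ) : T (p - 1) q (n - (p - 1) - q) →ₗ[R] T p q (n + 1 - p - q) :=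
  (castT T (by omega) rfl (by omega)).comp (dx (p - 1) q (n - (p - 1) - q))

def compY (n p q : ℤ) : T p (q - 1) (n - p - (q - 1)) →ₗ[R] T p q (n + 1 - p - q) :=
  (castT T rfl (by omega) (by omega)).comp (dy p (q - 1) (n - p - (q - 1)))

def compZ (n p q : ℤ) : T p q (n - p - q) →ₗ[R] T p q (n + 1 - p - q) :=
  (castT T rfl rfl (by omega)).comp (dz p q (n - p - q))

theorem apply (n : ℤ) (b : ∀ p q, T p q (n - p - q)) (p q : ℤ) :
    tot3d T dx dy dz n b p q
      = compX dx n p q (b (p - 1) q) + compY dy n p q (b p (q - 1)) + compZ dz n p q (b p q) :=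
  rfl

variable {dx dy dz}

theorem compX_compX (hxx : ∀ x y z (m : T x y z), dx (x + 1) y z (dx x y z m) = 0)
    (n p q : ℤ) (m : T (p - 1 - 1) q (n - (p - 1 - 1) - q)) :
    compX dx (n + 1) p q (compX dx n (p - 1) q m) = 0 := by
  simp [compX, dx_castT, hxx]

theorem compY_compY (hyy : ∀ x y z (m : T x y z), dy x (y + 1) z (dy x y z m) = 0)
    (n p q : ℤ) (m : T p (q - 1 - 1) (n - p - (q - 1 - 1))) :
    compY dy (n + 1) p q (compY dy n p (q - 1) m) = 0 := by
  simp [compY, dy_castT, hyy]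

theorem compX_compY_add_compY_compX
    (hxy : ∀ x y z (m : T x y z), dx x (y + 1) z (dy x y z m) + dy (x + 1) y z (dx x y z m) = 0)
    (n p q : ℤ) (m : T (p - 1) (q - 1) (n - (p - 1) - (q - 1))) :
    compX dx (n + 1) p q (compY dy n (p - 1) q m)
      + compY dy (n + 1) p q (compX dx n p (q - 1) m) = 0 := by
  simp only [compX, compY, LinearMap.comp_apply, dx_castT, dy_castT, castT_castT]
  rw [← map_add, hxy, map_zero]

theorem compX_compZ_add_compZ_compX
    (hxz : ∀ x y z (m : T x y z), dx x y (z + 1) (dz x y z m) + dz (x + 1) y z (dx x y z m) = 0)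
    (n p q : ℤ) (m : T (p - 1) q (n - (p - 1) - q)) :
    compX dx (n + 1) p q (compZ dz n (p - 1) q m)
      + compZ dz (n + 1) p q (compX dx n p q m) = 0 := by
  simp only [compX, compZ, LinearMap.comp_apply, dx_castT, dz_castT, castT_castT]
  rw [← map_add, hxz, map_zero]

theorem compY_compZ_add_compZ_compY
    (hyz : ∀ x y z (m : T x y z), dy x y (z + 1) (dz x y z m) + dz x (y + 1) z (dy x y z m) = 0)
    (n p q : ℤ) (m : T p (q - 1) (n - p - (q - 1))) :
    compY dy (n + 1) p q (compZ dz n p (q - 1) m)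
      + compZ dz (n + 1) p q (compY dy n p q m) = 0 := by
  simp only [compY, compZ, LinearMap.comp_apply, dy_castT, dz_castT, castT_castT]
  rw [← map_add, hyz, map_zero]

theorem exists_compZ_eq
    (hz : ∀ x y z (m : T x y (z + 1)), dz x y (z + 1) m = 0 → ∃ m' : T x y z, dz x y z m' = m)
    {n p q : ℤ} {m : T p q (n + 1 - p - q)} (hm : compZ dz (n + 1) p q m = 0) :
    ∃ m', compZ dz n p q m' = m := by
  have hcycle : dz p q (n - p - q + 1) (castT (R := R) T rfl rfl (by omega) m) = 0 := by
    simpa [compZ, dz_castT] using hm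
  obtain ⟨m', hm'⟩ := hz p q (n - p - q) _ hcycle
  exact ⟨m', by simp [compZ, hm']⟩

end tot3d

namespace bltTot

open tot3d

variable {R : Type} [Ring R] {T : ℤ → ℤ → ℤ → Type}
    [∀ x y z, AddCommGroup (T x y z)] [∀ x y z, Module R (T x y z)]
    {dx : ∀ x y z, T x y z →ₗ[R] T (x + 1) y z}
    {dy : ∀ x y z, T x y z →ₗ[R] T x (y + 1) z}
    {dz : ∀ x y z, T x y z →ₗ[R] T x y (z + 1)}
    {n : ℤ} {a : ∀ p q, T p q (n + 1 - p - q)}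

def residual (dx : ∀ x y z, T x y z →ₗ[R] T (x + 1) y z)
    (dy : ∀ x y z, T x y z →ₗ[R] T x (y + 1) z) (n : ℤ) (a : ∀ p q, T p q (n + 1 - p - q))
    (b : ∀ p q, T p q (n - p - q)) (p q : ℤ) : T p q (n + 1 - p - q) :=
  a p q - compX dx n p q (b (p - 1) q) - compY dy n p q (b p (q - 1))

theorem compZ_residual
    (hxx : ∀ x y z (m : T x y z), dx (x + 1) y z (dx x y z m) = 0)
    (hyy : ∀ x y z (m : T x y z), dy x (y + 1) z (dy x y z m) = 0)
    (hxy : ∀ x y z (m : T x y z), dx x (y + 1) z (dy x y z m) + dy (x + 1) y z (dx x y z m) = 0)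
    (hxz : ∀ x y z (m : T x y z), dx x y (z + 1) (dz x y z m) + dz (x + 1) y z (dx x y z m) = 0)
    (hyz : ∀ x y z (m : T x y z), dy x y (z + 1) (dz x y z m) + dz x (y + 1) z (dy x y z m) = 0)
    (ha : tot3d T dx dy dz (n + 1) a = 0) {b : ∀ p q, T p q (n - p - q)} {p q : ℤ}
    (hb₁ : compZ dz n (p - 1) q (b (p - 1) q) = residual dx dy n a b (p - 1) q)
    (hb₂ : compZ dz n p (q - 1) (b p (q - 1)) = residual dx dy n a b p (q - 1)) :
    compZ dz (n + 1) p q (residual dx dy n a b p q) = 0 := by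
  have hapq : compZ dz (n + 1) p q (a p q)
      = -(compX dx (n + 1) p q (a (p - 1) q) + compY dy (n + 1) p q (a p (q - 1))) :=
    eq_neg_of_add_eq_zero_right (by rw [← apply, ha]; rfl)
  have hXZ := compX_compZ_add_compZ_compX hxz n p q (b (p - 1) q)
  have hYZ := compY_compZ_add_compZ_compY hyz n p q (b p (q - 1))
  have hXY := compX_compY_add_compY_compX hxy n p q (b (p - 1) (q - 1))
  rw [hb₁, residual, map_sub, map_sub, compX_compX hxx] at hXZ
  rw [hb₂, residual, map_sub, map_sub, compY_compY hyy] at hYZ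
  rw [residual, map_sub, map_sub, hapq]
  linear_combination (norm := module) -hXZ - hYZ - hXY

open Classical in
noncomputable def compZLift (dz : ∀ x y z, T x y z →ₗ[R] T x y (z + 1)) (n p q : ℤ)
    (m : T p q (n + 1 - p - q)) : T p q (n - p - q) :=
  if h : ∃ m', compZ dz n p q m' = m then h.choose else 0

theorem compZ_compZLift
    (hz : ∀ x y z (m : T x y (z + 1)), dz x y (z + 1) m = 0 → ∃ m' : T x y z, dz x y z m' = m)
    {p q : ℤ} {m : T p q (n + 1 - p - q)} (hm : compZ dz (n + 1) p q m = 0) :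
    compZ dz n p q (compZLift dz n p q m) = m := by
  have h := exists_compZ_eq hz hm
  rw [compZLift, dif_pos h]
  exact h.choose_spec

noncomputable def primitive (dx : ∀ x y z, T x y z →ₗ[R] T (x + 1) y z)
    (dy : ∀ x y z, T x y z →ₗ[R] T x (y + 1) z) (dz : ∀ x y z, T x y z →ₗ[R] T x y (z + 1))
    (n k : ℤ) (a : ∀ p q, T p q (n + 1 - p - q)) (p q : ℤ) : T p q (n - p - q) :=
  if p < k ∨ q < k then 0
  else compZLift dz n p q (a p q - compX dx n p q (primitive dx dy dz n k a (p - 1) q)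
    - compY dy n p q (primitive dx dy dz n k a p (q - 1)))
termination_by (p + q - 2 * k + 1).toNat
decreasing_by all_goals omega

theorem primitive_of_lt {k p q : ℤ} (h : p < k ∨ q < k) : primitive dx dy dz n k a p q = 0 := by
  rw [primitive, if_pos h]

theorem compZ_primitive
    (hxx : ∀ x y z (m : T x y z), dx (x + 1) y z (dx x y z m) = 0)
    (hyy : ∀ x y z (m : T x y z), dy x (y + 1) z (dy x y z m) = 0)
    (hxy : ∀ x y z (m : T x y z), dx x (y + 1) z (dy x y z m) + dy (x + 1) y z (dx x y z m) = 0)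
    (hxz : ∀ x y z (m : T x y z), dx x y (z + 1) (dz x y z m) + dz (x + 1) y z (dx x y z m) = 0)
    (hyz : ∀ x y z (m : T x y z), dy x y (z + 1) (dz x y z m) + dz x (y + 1) z (dy x y z m) = 0)
    (hz : ∀ x y z (m : T x y (z + 1)), dz x y (z + 1) m = 0 → ∃ m' : T x y z, dz x y z m' = m)
    {k : ℤ} (ha₀ : ∀ p q : ℤ, p < k ∨ q < k → a p q = 0) (ha : tot3d T dx dy dz (n + 1) a = 0)
    (p q : ℤ) :
    compZ dz n p q (primitive dx dy dz n k a p q)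
      = residual dx dy n a (primitive dx dy dz n k a) p q := by
  by_cases h : p < k ∨ q < k
  · rw [residual, primitive_of_lt h, primitive_of_lt (by omega), primitive_of_lt (by omega),
      ha₀ p q h]
    simp
  · rw [primitive, if_neg h]
    exact compZ_compZLift hz <| compZ_residual hxx hyy hxy hxz hyz ha
      (compZ_primitive hxx hyy hxy hxz hyz hz ha₀ ha (p - 1) q)
      (compZ_primitive hxx hyy hxy hxz hyz hz ha₀ ha p (q - 1))
termination_by (p + q - 2 * k + 1).toNat
decreasing_by all_goals omega

end bltTot

open bltTot in
theorem bltTot_acyclic_of_exact_z_general (R : Type) [Ring R]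
    (T : ℤ → ℤ → ℤ → Type)
    [∀ x y z, AddCommGroup (T x y z)] [∀ x y z, Module R (T x y z)]
    (dx : ∀ x y z, T x y z →ₗ[R] T (x + 1) y z)
    (dy : ∀ x y z, T x y z →ₗ[R] T x (y + 1) z)
    (dz : ∀ x y z, T x y z →ₗ[R] T x y (z + 1))
    (hxx : ∀ x y z (m : T x y z), dx (x + 1) y z (dx x y z m) = 0)
    (hyy : ∀ x y z (m : T x y z), dy x (y + 1) z (dy x y z m) = 0)
    (hxy : ∀ x y z (m : T x y z), dx x (y + 1) z (dy x y z m) + dy (x + 1) y z (dx x y z m) = 0)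
    (hxz : ∀ x y z (m : T x y z), dx x y (z + 1) (dz x y z m) + dz (x + 1) y z (dx x y z m) = 0)
    (hyz : ∀ x y z (m : T x y z), dy x y (z + 1) (dz x y z m) + dz x (y + 1) z (dy x y z m) = 0)
    -- exactness in the `z`-direction:
    (hz : ∀ x y z (m : T x y (z + 1)), dz x y (z + 1) m = 0 → ∃ m' : T x y z, dz x y z m' = m) :
    ∀ (n : ℤ) (a : ∀ p q, T p q (n + 1 - p - q)),
      (∃ k : ℤ, ∀ p q : ℤ, p < k ∨ q < k → a p q = 0) →
      tot3d T dx dy dz (n + 1) a = 0 →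
      ∃ b : ∀ p q, T p q (n - p - q),
        (∃ k : ℤ, ∀ p q : ℤ, p < k ∨ q < k → b p q = 0) ∧ tot3d T dx dy dz n b = a := by
  rintro n a ⟨k, ha₀⟩ ha
  refine ⟨primitive dx dy dz n k a, ⟨k, fun p q => primitive_of_lt⟩, ?_⟩
  funext p q
  rw [tot3d.apply, compZ_primitive hxx hyy hxy hxz hyz hz ha₀ ha, bltTot.residual]
  abel

/-- Let `T` be a triple complex of `R`-modules (three anticommuting differentials squaring to
zero) which is exact in the `z`-direction.  Then its below-and-left truncated totalisation —
whose `n`-th term consists of those elements of `∀ p q, T p q (n - p - q)` vanishing as soon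
as `p` or `q` is small enough — is acyclic. -/
theorem bltTot_acyclic_of_exact_z (R : Type) [Ring R]
    (T : ℤ → ℤ → ℤ → Type)
    [∀ x y z, AddCommGroup (T x y z)] [∀ x y z, Module R (T x y z)]
    (dx : ∀ x y z, T x y z →ₗ[R] T (x + 1) y z)
    (dy : ∀ x y z, T x y z →ₗ[R] T x (y + 1) z)
    (dz : ∀ x y z, T x y z →ₗ[R] T x y (z + 1))
    (hxx : ∀ x y z (m : T x y z), dx (x + 1) y z (dx x y z m) = 0)
    (hyy : ∀ x y z (m : T x y z), dy x (y + 1) z (dy x y z m) = 0)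
    (hzz : ∀ x y z (m : T x y z), dz x y (z + 1) (dz x y z m) = 0)
    (hxy : ∀ x y z (m : T x y z), dx x (y + 1) z (dy x y z m) + dy (x + 1) y z (dx x y z m) = 0)
    (hxz : ∀ x y z (m : T x y z), dx x y (z + 1) (dz x y z m) + dz (x + 1) y z (dx x y z m) = 0)
    (hyz : ∀ x y z (m : T x y z), dy x y (z + 1) (dz x y z m) + dz x (y + 1) z (dy x y z m) = 0)
    -- exactness in the `z`-direction:
    (hz : ∀ x y z (m : T x y (z + 1)), dz x y (z + 1) m = 0 → ∃ m' : T x y z, dz x y z m' = m) :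
    ∀ (n : ℤ) (a : ∀ p q, T p q (n + 1 - p - q)),
      (∃ k : ℤ, ∀ p q : ℤ, p < k ∨ q < k → a p q = 0) →
      tot3d T dx dy dz (n + 1) a = 0 →
      ∃ b : ∀ p q, T p q (n - p - q),
        (∃ k : ℤ, ∀ p q : ℤ, p < k ∨ q < k → b p q = 0) ∧ tot3d T dx dy dz n b = a :=
  bltTot_acyclic_of_exact_z_general R T dx dy dz hxx hyy hxy hxz hyz hz
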